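/- Let ζ_λ, ζ₀ : [0,∞) → [0,∞) be measurable with 0 ≤ ζ_λ(r²) ≤ K r^{3+γ} and |ζ_λ(r²) - ζ₀(r²)| ≤ K' r^{3+γ} for all r ≥ 0 and λ ∈ (0,1], and suppose sup_{0≤r≤R} |ζ_λ(r²) - ζ₀(r²)| → 0 as λ → 0 for each R > 0. For integrable f, g define I_λ(f,g) = ∫∫ f(v) g(v₊) ζ_λ(|v-v₊|²) dv dv₊ and I₀ similarly with ζ₀. Then for any δ > 0 there is a constant A_γ (depending only on γ) such that for every ε > 0 there exists λ₀ ∈ (0,1) with: for all λ ∈ (0,λ₀) and all f₁,f₂,g₁,g₂ with finite weighted L¹ norms, |I_λ(f₁,g₁) - I₀(f₂,g₂)| ≤ A_γ (‖f₁-f₂‖_{L¹_{3+γ}} ‖g₁‖_{L¹_{3+γ}} + ‖g₁-g₂‖_{L¹_{3+γ}} ‖f₂‖_{L¹_{3+γ}}) + ε (‖f₂‖_{L¹}‖g₂‖_{L¹} + ‖f₂‖_{L¹_{3+γ+δ}}‖g₂‖_{L¹_{3+γ+δ}}). -/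

import Mathlib

open Real Set MeasureTheory Filter

abbrev E3 := EuclideanSpace ℝ (Fin 3)

/-- Weighted `L¹` norm `‖f‖_{L¹_k} = ∫ |f(v)| ⟨v⟩^k dv`. -/
noncomputable def wL1 (f : E3 → ℝ) (k : ℝ) : ℝ :=
  ∫ v : E3, |f v| * (1 + ‖v‖ ^ 2) ^ (k / 2)

/-- The energy dissipation functional `I(f, g) = ∫∫ f(v) g(v*) ζ(|v-v*|²) dv dv*`. -/
noncomputable def dissip (ζ : ℝ → ℝ) (f g : E3 → ℝ) : ℝ :=
  ∫ v : E3, ∫ w : E3, f v * g w * ζ (‖v - w‖ ^ 2)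

/-!
Write `f₁ g₁ ζ_λ - f₂ g₂ ζ₀ = (f₁ - f₂) g₁ ζ_λ + f₂ (g₁ - g₂) ζ_λ + f₂ g₂ (ζ_λ - ζ₀)`. The first two
terms are controlled by the growth bound `|ζ_λ(r²)| ≤ K r^{3+γ}` together with
`|v - w|^p ≤ 2^{p/2} ⟨v⟩^p ⟨w⟩^p`, which makes the double integral split into weighted norms.
In the third, the kernel difference is at most `ε` for `|v - w| ≤ R` once `λ` is small (locally
uniform convergence), and at most `K' r^{3+γ} ≤ (K' / R^δ) r^{3+γ+δ}` for `|v - w| > R`; taking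
`R` so large that `2^{(3+γ+δ)/2} K' / R^δ ≤ ε` turns both pieces into the `ε`-term.
-/

open Topology

section Weight

variable {E : Type*} [SeminormedAddCommGroup E]

theorem norm_sub_rpow_le_mul_weight {p : ℝ} (hp : 0 ≤ p) (v w : E) :
    ‖v - w‖ ^ p ≤ 2 ^ (p / 2) * ((1 + ‖v‖ ^ 2) ^ (p / 2) * (1 + ‖w‖ ^ 2) ^ (p / 2)) := by
  have hsq : ‖v - w‖ ^ 2 ≤ 2 * ((1 + ‖v‖ ^ 2) * (1 + ‖w‖ ^ 2)) := by
    nlinarith [norm_sub_le v w, norm_nonneg (v - w), norm_nonneg v, norm_nonneg w,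
      sq_nonneg (‖v‖ - ‖w‖), sq_nonneg (‖v‖ * ‖w‖)]
  calc ‖v - w‖ ^ p = (‖v - w‖ ^ 2) ^ (p / 2) := by
        rw [← Real.rpow_natCast, ← Real.rpow_mul (norm_nonneg _)]; ring_nf
    _ ≤ (2 * ((1 + ‖v‖ ^ 2) * (1 + ‖w‖ ^ 2))) ^ (p / 2) := by gcongr
    _ = _ := by rw [Real.mul_rpow, Real.mul_rpow] <;> positivity

noncomputable def weightedAbs (f : E → ℝ) (k : ℝ) (v : E) : ℝ :=
  |f v| * (1 + ‖v‖ ^ 2) ^ (k / 2)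

theorem weightedAbs_nonneg (f : E → ℝ) (k : ℝ) (v : E) : 0 ≤ weightedAbs f k v := by
  unfold weightedAbs; positivity

theorem weightedAbs_zero (f : E → ℝ) (v : E) : weightedAbs f 0 v = |f v| := by
  simp [weightedAbs]

theorem weightedAbs_mono (f : E → ℝ) {p q : ℝ} (hpq : p ≤ q) (v : E) :
    weightedAbs f p v ≤ weightedAbs f q v :=
  mul_le_mul_of_nonneg_left
    (Real.rpow_le_rpow_of_exponent_le (le_add_of_nonneg_right (by positivity)) (by linarith))
    (abs_nonneg _)

theorem weightedAbs_sub_le (f₁ f₂ : E → ℝ) (k : ℝ) (v : E) :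
    weightedAbs (f₁ - f₂) k v ≤ weightedAbs f₁ k v + weightedAbs f₂ k v := by
  unfold weightedAbs
  rw [← add_mul]
  exact mul_le_mul_of_nonneg_right (abs_sub _ _) (by positivity)

variable [MeasurableSpace E] [OpensMeasurableSpace E] {μ : Measure E}

theorem Measurable.weightedAbs {f : E → ℝ} (hf : Measurable f) (k : ℝ) :
    Measurable (weightedAbs f k) := by
  unfold _root_.weightedAbs; fun_prop

theorem MeasureTheory.Integrable.weightedAbs_of_le {f : E → ℝ} (hf : Measurable f) {p q : ℝ}
    (hpq : p ≤ q) (h : Integrable (weightedAbs f q) μ) : Integrable (weightedAbs f p) μ :=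
  h.mono' (hf.weightedAbs p).aestronglyMeasurable <| Eventually.of_forall fun v => by
    rw [Real.norm_of_nonneg (weightedAbs_nonneg f p v)]
    exact weightedAbs_mono f hpq v

theorem MeasureTheory.Integrable.weightedAbs_sub {f₁ f₂ : E → ℝ} (hf₁ : Measurable f₁)
    (hf₂ : Measurable f₂) {k : ℝ} (h₁ : Integrable (weightedAbs f₁ k) μ)
    (h₂ : Integrable (weightedAbs f₂ k) μ) :
    Integrable (weightedAbs (f₁ - f₂) k) μ :=
  (h₁.add h₂).mono' ((hf₁.sub hf₂).weightedAbs k).aestronglyMeasurable <|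
    Eventually.of_forall fun v => by
      rw [Real.norm_of_nonneg (weightedAbs_nonneg _ k v)]
      exact weightedAbs_sub_le f₁ f₂ k v

end Weight

theorem wL1_nonneg (f : E3 → ℝ) (k : ℝ) : 0 ≤ wL1 f k :=
  integral_nonneg (weightedAbs_nonneg f k)

section Dissipation

noncomputable def dissipIntegrand (ζ : ℝ → ℝ) (f g : E3 → ℝ) (z : E3 × E3) : ℝ :=
  f z.1 * g z.2 * ζ (‖z.1 - z.2‖ ^ 2)

theorem dissip_eq_integral_prod {ζ : ℝ → ℝ} {f g : E3 → ℝ}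
    (h : Integrable (dissipIntegrand ζ f g)) :
    dissip ζ f g = ∫ z, dissipIntegrand ζ f g z :=
  integral_integral h

theorem dissip_sub_dissip {ζ ζ₀ : ℝ → ℝ} {f₁ f₂ g₁ g₂ : E3 → ℝ}
    (h₁ : Integrable (dissipIntegrand ζ f₁ g₁))
    (h₀ : Integrable (dissipIntegrand ζ₀ f₂ g₂))
    (hf : Integrable (dissipIntegrand ζ (f₁ - f₂) g₁))
    (hg : Integrable (dissipIntegrand ζ f₂ (g₁ - g₂)))
    (hζ : Integrable (dissipIntegrand (ζ - ζ₀) f₂ g₂)) :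
    dissip ζ f₁ g₁ - dissip ζ₀ f₂ g₂
      = dissip ζ (f₁ - f₂) g₁ + dissip ζ f₂ (g₁ - g₂) + dissip (ζ - ζ₀) f₂ g₂ := by
  rw [dissip_eq_integral_prod h₁, dissip_eq_integral_prod h₀, dissip_eq_integral_prod hf,
    dissip_eq_integral_prod hg, dissip_eq_integral_prod hζ, ← integral_sub' h₁ h₀,
    ← integral_add' hf hg, ← integral_add' (hf.add hg) hζ]
  congr 1 with z
  simp only [dissipIntegrand, Pi.sub_apply, Pi.add_apply]
  ring

variable {ξ : ℝ → ℝ} {a b q : ℝ} {f g : E3 → ℝ}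

theorem abs_dissipIntegrand_le (hb : 0 ≤ b) (hq : 0 ≤ q)
    (hξ : ∀ r ≥ 0, |ξ (r ^ 2)| ≤ a + b * r ^ q) (z : E3 × E3) :
    |dissipIntegrand ξ f g z| ≤ a * (weightedAbs f 0 z.1 * weightedAbs g 0 z.2)
      + b * 2 ^ (q / 2) * (weightedAbs f q z.1 * weightedAbs g q z.2) := by
  have hk := hξ _ (norm_nonneg (z.1 - z.2))
  have hw := norm_sub_rpow_le_mul_weight hq z.1 z.2
  calc |dissipIntegrand ξ f g z| = |f z.1| * |g z.2| * |ξ (‖z.1 - z.2‖ ^ 2)| := by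
        rw [dissipIntegrand, abs_mul, abs_mul]
    _ ≤ |f z.1| * |g z.2| * (a + b * (2 ^ (q / 2)
          * ((1 + ‖z.1‖ ^ 2) ^ (q / 2) * (1 + ‖z.2‖ ^ 2) ^ (q / 2)))) := by
        gcongr; exact hk.trans (by gcongr)
    _ = _ := by simp only [weightedAbs_zero]; unfold weightedAbs; ring

theorem integrable_weightedAbs_majorant (hf : Measurable f) (hg : Measurable g) (hq : 0 ≤ q)
    (hfi : Integrable (weightedAbs f q)) (hgi : Integrable (weightedAbs g q)) (c : ℝ) :
    Integrable (fun z : E3 × E3 => a * (weightedAbs f 0 z.1 * weightedAbs g 0 z.2)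
      + c * (weightedAbs f q z.1 * weightedAbs g q z.2)) :=
  (((hfi.weightedAbs_of_le hf hq).mul_prod (hgi.weightedAbs_of_le hg hq)).const_mul a).add
    ((hfi.mul_prod hgi).const_mul c)

theorem integral_weightedAbs_majorant (hf : Measurable f) (hg : Measurable g) (hq : 0 ≤ q)
    (hfi : Integrable (weightedAbs f q)) (hgi : Integrable (weightedAbs g q)) (c : ℝ) :
    ∫ z : E3 × E3, a * (weightedAbs f 0 z.1 * weightedAbs g 0 z.2)
      + c * (weightedAbs f q z.1 * weightedAbs g q z.2)
      = a * (wL1 f 0 * wL1 g 0) + c * (wL1 f q * wL1 g q) := by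
  rw [Measure.volume_eq_prod, integral_add
      (((hfi.weightedAbs_of_le hf hq).mul_prod (hgi.weightedAbs_of_le hg hq)).const_mul a)
      ((hfi.mul_prod hgi).const_mul c),
    integral_const_mul, integral_const_mul, integral_prod_mul, integral_prod_mul]
  rfl

theorem integrable_dissipIntegrand (hξm : Measurable ξ) (hb : 0 ≤ b) (hq : 0 ≤ q)
    (hξ : ∀ r ≥ 0, |ξ (r ^ 2)| ≤ a + b * r ^ q) (hf : Measurable f) (hg : Measurable g)
    (hfi : Integrable (weightedAbs f q)) (hgi : Integrable (weightedAbs g q)) :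
    Integrable (dissipIntegrand ξ f g) :=
  (integrable_weightedAbs_majorant hf hg hq hfi hgi _).mono'
    (by unfold dissipIntegrand; fun_prop)
    (Eventually.of_forall fun z => abs_dissipIntegrand_le hb hq hξ z)

theorem abs_dissip_le (hξm : Measurable ξ) (hb : 0 ≤ b) (hq : 0 ≤ q)
    (hξ : ∀ r ≥ 0, |ξ (r ^ 2)| ≤ a + b * r ^ q) (hf : Measurable f) (hg : Measurable g)
    (hfi : Integrable (weightedAbs f q)) (hgi : Integrable (weightedAbs g q)) :
    |dissip ξ f g| ≤ a * (wL1 f 0 * wL1 g 0) + b * 2 ^ (q / 2) * (wL1 f q * wL1 g q) := by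
  have hint := integrable_dissipIntegrand hξm hb hq hξ hf hg hfi hgi
  rw [dissip_eq_integral_prod hint]
  calc _ ≤ ∫ z, |dissipIntegrand ξ f g z| := abs_integral_le_integral_abs
    _ ≤ _ := integral_mono hint.abs (integrable_weightedAbs_majorant hf hg hq hfi hgi _)
        fun z => abs_dissipIntegrand_le hb hq hξ z
    _ = _ := integral_weightedAbs_majorant hf hg hq hfi hgi _

end Dissipation

theorem abs_dissip_sub_dissip_le {ζ ζ₀ : ℝ → ℝ} (hζm : Measurable ζ) (hζ₀m : Measurable ζ₀)
    {K p a b q : ℝ} (hp : 0 ≤ p) (hpq : p ≤ q) (hK : 0 ≤ K) (hb : 0 ≤ b)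
    (hζ : ∀ r ≥ 0, |ζ (r ^ 2)| ≤ K * r ^ p)
    (hζζ₀ : ∀ r ≥ 0, |ζ (r ^ 2) - ζ₀ (r ^ 2)| ≤ a + b * r ^ q)
    {f₁ f₂ g₁ g₂ : E3 → ℝ} (hf₁ : Measurable f₁) (hf₂ : Measurable f₂)
    (hg₁ : Measurable g₁) (hg₂ : Measurable g₂)
    (hif₁ : Integrable (weightedAbs f₁ q)) (hif₂ : Integrable (weightedAbs f₂ q))
    (hig₁ : Integrable (weightedAbs g₁ q)) (hig₂ : Integrable (weightedAbs g₂ q)) :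
    |dissip ζ f₁ g₁ - dissip ζ₀ f₂ g₂|
      ≤ K * 2 ^ (p / 2) * (wL1 (f₁ - f₂) p * wL1 g₁ p + wL1 (g₁ - g₂) p * wL1 f₂ p)
        + (a * (wL1 f₂ 0 * wL1 g₂ 0) + b * 2 ^ (q / 2) * (wL1 f₂ q * wL1 g₂ q)) := by
  have hq : 0 ≤ q := hp.trans hpq
  have hζ' : ∀ r ≥ 0, |ζ (r ^ 2)| ≤ 0 + K * r ^ p := by simpa only [zero_add] using hζ
  have hifp₁ := hif₁.weightedAbs_of_le hf₁ hpq
  have hifp₂ := hif₂.weightedAbs_of_le hf₂ hpq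
  have higp₁ := hig₁.weightedAbs_of_le hg₁ hpq
  have higp₂ := hig₂.weightedAbs_of_le hg₂ hpq
  have hζ_sub : Measurable (ζ - ζ₀) := hζm.sub hζ₀m
  have hint_sub := integrable_dissipIntegrand hζ_sub hb hq hζζ₀ hf₂ hg₂ hif₂ hig₂
  have hint₂ := integrable_dissipIntegrand hζm hK hp hζ' hf₂ hg₂ hifp₂ higp₂
  -- `ζ₀` has no growth bound of its own: write it as `ζ - (ζ - ζ₀)`.
  have hint₀ : Integrable (dissipIntegrand ζ₀ f₂ g₂) := by
    convert hint₂.sub hint_sub using 1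
    ext z
    simp only [dissipIntegrand, Pi.sub_apply]
    ring
  rw [dissip_sub_dissip (integrable_dissipIntegrand hζm hK hp hζ' hf₁ hg₁ hifp₁ higp₁) hint₀
    (integrable_dissipIntegrand hζm hK hp hζ' (hf₁.sub hf₂) hg₁
      (hifp₁.weightedAbs_sub hf₁ hf₂ hifp₂) higp₁)
    (integrable_dissipIntegrand hζm hK hp hζ' hf₂ (hg₁.sub hg₂) hifp₂
      (higp₁.weightedAbs_sub hg₁ hg₂ higp₂))
    hint_sub]
  have e₁ := abs_dissip_le hζm hK hp hζ' (hf₁.sub hf₂) hg₁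
    (hifp₁.weightedAbs_sub hf₁ hf₂ hifp₂) higp₁
  have e₂ := abs_dissip_le hζm hK hp hζ' hf₂ (hg₁.sub hg₂) hifp₂
    (higp₁.weightedAbs_sub hg₁ hg₂ higp₂)
  have e₃ := abs_dissip_le hζ_sub hb hq hζζ₀ hf₂ hg₂ hif₂ hig₂
  simp only [zero_mul, zero_add] at e₁ e₂
  exact (abs_add_three _ _ _).trans (by linear_combination e₁ + e₂ + e₃)

section Kernel

theorem le_biSup_of_forall_le {ι α : Type*} [ConditionallyCompleteLattice α] {h : ι → α}
    {S : Set ι} {B : α} (hB : ∀ x ∈ S, h x ≤ B) {x : ι} (hx : x ∈ S) :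
    h x ≤ ⨆ y ∈ S, h y :=
  le_ciSup₂ (f := fun y (_ : y ∈ S) => h y)
    ⟨B, by
      simp only [mem_upperBounds, mem_iUnion, mem_range]
      rintro _ ⟨y, hy, rfl⟩
      exact hB y hy⟩ x hx

theorem abs_le_add_mul_rpow_of_abs_le_on_Icc {h : ℝ → ℝ} {ε C p δ R : ℝ} (hR : 0 < R)
    (hδ : 0 ≤ δ) (hC : 0 ≤ C) (hsmall : ∀ r ∈ Icc 0 R, |h r| ≤ ε)
    (hlarge : ∀ r ≥ 0, |h r| ≤ C * r ^ p) :
    ∀ r ≥ 0, |h r| ≤ ε + C / R ^ δ * r ^ (p + δ) := by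
  intro r hr
  rcases le_or_gt r R with hrR | hRr
  · exact (hsmall r ⟨hr, hrR⟩).trans (le_add_of_nonneg_right (by positivity))
  · have hε : 0 ≤ ε := (abs_nonneg _).trans (hsmall 0 ⟨le_rfl, hR.le⟩)
    have hr₀ : 0 < r := hR.trans hRr
    calc |h r| ≤ C * r ^ p := hlarge r hr
      _ = C / R ^ δ * (r ^ p * R ^ δ) := by field_simp
      _ ≤ C / R ^ δ * (r ^ p * r ^ δ) := by gcongr
      _ = C / R ^ δ * r ^ (p + δ) := by rw [rpow_add hr₀]
      _ ≤ _ := le_add_of_nonneg_left hε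

theorem exists_pos_div_rpow_le (C : ℝ) {δ ε : ℝ} (hδ : 0 < δ) (hε : 0 < ε) :
    ∃ R > 0, C / R ^ δ ≤ ε :=
  (((tendsto_const_nhds.div_atTop (tendsto_rpow_atTop hδ)).eventually (ge_mem_nhds hε)).and
    (eventually_gt_atTop 0)).exists.imp fun _ h => ⟨h.2, h.1⟩

theorem Filter.Eventually.exists_Ioo_of_nhdsGT {α : Type*} [LinearOrder α] [TopologicalSpace α]
    [OrderTopology α] [DenselyOrdered α] [NoMaxOrder α] {a b : α} (hab : a < b) {p : α → Prop}
    (h : ∀ᶠ x in 𝓝[>] a, p x) : ∃ c ∈ Ioo a b, ∀ x ∈ Ioo a c, p x := by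
  obtain ⟨u, hu, hsub⟩ := mem_nhdsGT_iff_exists_Ioo_subset.1 h
  obtain ⟨c, hac, hc⟩ := exists_between (lt_min hu hab)
  exact ⟨c, ⟨hac, hc.trans_le (min_le_right _ _)⟩,
    fun x hx => hsub ⟨hx.1, hx.2.trans (hc.trans_le (min_le_left _ _))⟩⟩

end Kernel

theorem stmt14 (γ K K' : ℝ) (hγ : 0 < γ) (hK : 0 < K) (hK' : 0 < K')
    (ζ : ℝ → ℝ → ℝ) (ζ₀ : ℝ → ℝ)
    (hmeas : ∀ lam, Measurable (ζ lam)) (hmeas0 : Measurable ζ₀)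
    (hbnd : ∀ lam ∈ Set.Ioc (0 : ℝ) 1, ∀ r ≥ (0 : ℝ),
      0 ≤ ζ lam (r ^ 2) ∧ ζ lam (r ^ 2) ≤ K * r ^ (3 + γ))
    (hdiff : ∀ lam ∈ Set.Ioc (0 : ℝ) 1, ∀ r ≥ (0 : ℝ),
      |ζ lam (r ^ 2) - ζ₀ (r ^ 2)| ≤ K' * r ^ (3 + γ))
    (hconv : ∀ R > (0 : ℝ),
      Tendsto (fun lam => ⨆ r ∈ Set.Icc (0 : ℝ) R, |ζ lam (r ^ 2) - ζ₀ (r ^ 2)|)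
        (nhdsWithin 0 (Set.Ioi 0)) (nhds 0)) :
    ∃ A > (0 : ℝ), ∀ δ > (0 : ℝ), ∀ ε > (0 : ℝ), ∃ lam₀ ∈ Set.Ioo (0 : ℝ) 1,
      ∀ lam ∈ Set.Ioo (0 : ℝ) lam₀, ∀ f₁ f₂ g₁ g₂ : E3 → ℝ,
        Measurable f₁ → Measurable f₂ → Measurable g₁ → Measurable g₂ →
        Integrable (fun v : E3 => |f₁ v| * (1 + ‖v‖ ^ 2) ^ ((3 + γ + δ) / 2)) →
        Integrable (fun v : E3 => |f₂ v| * (1 + ‖v‖ ^ 2) ^ ((3 + γ + δ) / 2)) →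
        Integrable (fun v : E3 => |g₁ v| * (1 + ‖v‖ ^ 2) ^ ((3 + γ + δ) / 2)) →
        Integrable (fun v : E3 => |g₂ v| * (1 + ‖v‖ ^ 2) ^ ((3 + γ + δ) / 2)) →
        |dissip (ζ lam) f₁ g₁ - dissip ζ₀ f₂ g₂|
          ≤ A * (wL1 (f₁ - f₂) (3 + γ) * wL1 g₁ (3 + γ)
                + wL1 (g₁ - g₂) (3 + γ) * wL1 f₂ (3 + γ))
            + ε * (wL1 f₂ 0 * wL1 g₂ 0
                + wL1 f₂ (3 + γ + δ) * wL1 g₂ (3 + γ + δ)) := by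
  refine ⟨K * 2 ^ ((3 + γ) / 2), by positivity, fun δ hδ ε hε => ?_⟩
  obtain ⟨R, hR, hRε⟩ := exists_pos_div_rpow_le (K' * 2 ^ ((3 + γ + δ) / 2)) hδ hε
  have hsmall : ∀ᶠ lam in 𝓝[>] 0, lam ∈ Ioc (0 : ℝ) 1 ∧
      ⨆ r ∈ Icc (0 : ℝ) R, |ζ lam (r ^ 2) - ζ₀ (r ^ 2)| < ε :=
    Filter.Eventually.and (Ioc_mem_nhdsGT one_pos) ((hconv R hR).eventually (gt_mem_nhds hε))
  obtain ⟨lam₀, hlam₀, hlam₀_small⟩ := hsmall.exists_Ioo_of_nhdsGT one_pos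
  refine ⟨lam₀, hlam₀, fun lam hlam f₁ f₂ g₁ g₂ hf₁ hf₂ hg₁ hg₂ hif₁ hif₂ hig₁ hig₂ => ?_⟩
  obtain ⟨hlam, hsup⟩ := hlam₀_small lam hlam
  -- A real `⨆` bounds its terms only when they are bounded above, here by `K' R^{3+γ}`.
  have hnear : ∀ r ∈ Icc 0 R, |ζ lam (r ^ 2) - ζ₀ (r ^ 2)| ≤ ε := fun r hr =>
    (le_biSup_of_forall_le (B := K' * R ^ (3 + γ))
      (fun s hs => (hdiff lam hlam s hs.1).trans (by gcongr; exacts [hs.1, hs.2])) hr).trans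
        hsup.le
  have hkernel : ∀ r ≥ 0, |ζ lam (r ^ 2) - ζ₀ (r ^ 2)| ≤ ε + K' / R ^ δ * r ^ (3 + γ + δ) :=
    abs_le_add_mul_rpow_of_abs_le_on_Icc hR hδ.le hK'.le hnear (hdiff lam hlam)
  have hζ : ∀ r ≥ 0, |ζ lam (r ^ 2)| ≤ K * r ^ (3 + γ) := fun r hr => by
    obtain ⟨h₀, h₁⟩ := hbnd lam hlam r hr
    rwa [abs_of_nonneg h₀]
  have hcoef : K' / R ^ δ * 2 ^ ((3 + γ + δ) / 2) ≤ ε := by rwa [div_mul_eq_mul_div]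
  calc _ ≤ _ := abs_dissip_sub_dissip_le (hmeas lam) hmeas0 (by linarith) (by linarith) hK.le
        (by positivity) hζ hkernel hf₁ hf₂ hg₁ hg₂ hif₁ hif₂ hig₁ hig₂
    _ ≤ _ := by
        gcongr
        linear_combination (mul_le_mul_of_nonneg_right hcoef
          (mul_nonneg (wL1_nonneg f₂ (3 + γ + δ)) (wL1_nonneg g₂ (3 + γ + δ))))
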